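/- arXiv:2402.02731 — 6 statements merged into one kernel-verified Lean document; each statement's English description precedes it below -/
import Mathlib

section
/- For fixed probability vector q ∈ Δ^N_+ and α ∈ R_+ \ {1}, the function x ↦ D_α(q‖x) = (1/(α-1)) log⟨q^α, x^{1-α}⟩ on R^N_{++} is geodesically |1−α|-smooth with respect to the Poincaré metric: along any Poincaré geodesic γ(t) = x^{1-t} ⊙ y^t the composition t ↦ D_α(q‖γ(t)) has second derivative bounded by |1−α| · d(x,y)². -/
/-!
Writing `γ(s) = x ⊙ (y ⊘ x)^s`, the argument of the logarithm becomes an exponential sum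
`g(s) = ∑ cᵢ exp(bᵢ s)` with `cᵢ = qᵢ^α xᵢ^(1-α) > 0` and `bᵢ = (1-α) log(yᵢ/xᵢ)`.
The second derivative of `log g` is the variance of `b` under the Gibbs weights
`cᵢ exp(bᵢ s) / g(s)`: it is nonnegative by Cauchy–Schwarz and at most `maxᵢ bᵢ² ≤ ∑ᵢ bᵢ²`.
Multiplying by `(α-1)⁻¹` turns `(1-α)²` into `|1-α|`.
-/

open Real

lemma rpow_geodesic_eq {x y : ℝ} (hx : 0 < x) (hy : 0 < y) (p s : ℝ) :
    (x ^ (1 - s) * y ^ s) ^ p = x ^ p * exp (p * log (y / x) * s) := by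
  have hxs : 0 < x ^ (1 - s) := rpow_pos_of_pos hx _
  have hys : 0 < y ^ s := rpow_pos_of_pos hy _
  rw [rpow_def_of_pos (mul_pos hxs hys), log_mul hxs.ne' hys.ne', log_rpow hx, log_rpow hy,
    log_div hy.ne' hx.ne', rpow_def_of_pos hx, ← exp_add]
  congr 1
  ring

section ExpSum

variable {ι : Type*} [Fintype ι]

noncomputable def expSum (c b : ι → ℝ) (s : ℝ) : ℝ :=
  ∑ i, c i * exp (b i * s)

lemma hasDerivAt_expSum (c b : ι → ℝ) (s : ℝ) :
    HasDerivAt (expSum c b) (expSum (fun i => c i * b i) b s) s := by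
  unfold expSum
  refine HasDerivAt.fun_sum fun i _ => ?_
  refine ((((hasDerivAt_id s).const_mul (b i)).exp).const_mul (c i)).congr_deriv ?_
  simp only [id, mul_one]
  ring

lemma expSum_pos [Nonempty ι] {c : ι → ℝ} (hc : ∀ i, 0 < c i) (b : ι → ℝ) (s : ℝ) :
    0 < expSum c b s :=
  Finset.sum_pos (fun i _ => mul_pos (hc i) (exp_pos _)) Finset.univ_nonempty

lemma deriv_deriv_log_expSum [Nonempty ι] {c : ι → ℝ} (hc : ∀ i, 0 < c i) (b : ι → ℝ)
    (t : ℝ) :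
    deriv (deriv fun s => log (expSum c b s)) t =
      (expSum (fun i => c i * b i * b i) b t * expSum c b t
        - expSum (fun i => c i * b i) b t * expSum (fun i => c i * b i) b t)
        / expSum c b t ^ 2 := by
  have hlog : deriv (fun s => log (expSum c b s)) =
      fun s => expSum (fun i => c i * b i) b s / expSum c b s :=
    funext fun s => ((hasDerivAt_expSum c b s).log (expSum_pos hc b s).ne').deriv
  rw [hlog]
  exact ((hasDerivAt_expSum _ b t).div (hasDerivAt_expSum c b t) (expSum_pos hc b t).ne').deriv

lemma expSum_mul_self_le {c : ι → ℝ} (hc : ∀ i, 0 ≤ c i) (b : ι → ℝ) (t : ℝ) :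
    expSum (fun i => c i * b i) b t * expSum (fun i => c i * b i) b t ≤
      expSum c b t * expSum (fun i => c i * b i * b i) b t := by
  rw [← sq, expSum, expSum, expSum]
  refine Finset.sum_sq_le_sum_mul_sum_of_sq_le_mul _ (fun i _ => ?_) (fun i _ => ?_)
    (fun i _ => le_of_eq (by ring))
  · exact mul_nonneg (hc i) (exp_pos _).le
  · rw [mul_assoc (c i)]
    exact mul_nonneg (mul_nonneg (hc i) (mul_self_nonneg _)) (exp_pos _).le

lemma expSum_mul_mul_le {c b : ι → ℝ} {B : ℝ} (hc : ∀ i, 0 ≤ c i) (hB : ∀ i, b i * b i ≤ B)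
    (t : ℝ) : expSum (fun i => c i * b i * b i) b t ≤ B * expSum c b t := by
  rw [expSum, expSum, Finset.mul_sum]
  refine Finset.sum_le_sum fun i _ => ?_
  have hw : 0 ≤ c i * exp (b i * t) := mul_nonneg (hc i) (exp_pos _).le
  calc c i * b i * b i * exp (b i * t) = (b i * b i) * (c i * exp (b i * t)) := by ring
    _ ≤ B * (c i * exp (b i * t)) := mul_le_mul_of_nonneg_right (hB i) hw

lemma abs_deriv_deriv_log_expSum_le [Nonempty ι] {c b : ι → ℝ} {B : ℝ} (hc : ∀ i, 0 < c i)
    (hB : ∀ i, b i * b i ≤ B) (t : ℝ) :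
    |deriv (deriv fun s => log (expSum c b s)) t| ≤ B := by
  have hc₀ : ∀ i, 0 ≤ c i := fun i => (hc i).le
  have hg := expSum_pos hc b t
  have hvar := expSum_mul_self_le hc₀ b t
  have hsec := expSum_mul_mul_le hc₀ hB t
  rw [deriv_deriv_log_expSum hc, abs_of_nonneg (div_nonneg (by linarith) (sq_nonneg _)),
    div_le_iff₀ (by positivity)]
  nlinarith [mul_self_nonneg (expSum (fun i => c i * b i) b t)]

end ExpSum

theorem stmt_6_general (N : ℕ) (α : ℝ)
    (q : Fin N → ℝ) (hq : ∀ i, 0 < q i) (hq1 : ∑ i, q i = 1)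
    (x y : Fin N → ℝ) (hx : ∀ i, 0 < x i) (hy : ∀ i, 0 < y i) (t : ℝ) :
    |deriv (deriv fun s : ℝ =>
        (α - 1)⁻¹ * Real.log (∑ i, q i ^ α * (x i ^ (1 - s) * y i ^ s) ^ (1 - α))) t|
      ≤ |1 - α| * ∑ i, Real.log (y i / x i) ^ 2 := by
  have : Nonempty (Fin N) :=
    Finset.univ_nonempty_iff.mp (Finset.nonempty_of_sum_ne_zero (hq1 ▸ one_ne_zero))
  set c : Fin N → ℝ := fun i => q i ^ α * x i ^ (1 - α)
  set b : Fin N → ℝ := fun i => (1 - α) * log (y i / x i)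
  have hc : ∀ i, 0 < c i := fun i => mul_pos (rpow_pos_of_pos (hq i) α) (rpow_pos_of_pos (hx i) _)
  have hb : ∀ i, b i * b i ≤ ∑ j, b j * b j := fun i =>
    Finset.single_le_sum (fun j _ => mul_self_nonneg (b j)) (Finset.mem_univ i)
  have hsum : ∑ j, b j * b j = |1 - α| * |1 - α| * ∑ i, log (y i / x i) ^ 2 := by
    rw [abs_mul_abs_self, Finset.mul_sum]
    exact Finset.sum_congr rfl fun i _ => by ring
  have hgeod : ∀ s, ∑ i, q i ^ α * (x i ^ (1 - s) * y i ^ s) ^ (1 - α) = expSum c b s :=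
    fun s => Finset.sum_congr rfl fun i _ => by
      rw [rpow_geodesic_eq (hx i) (hy i), ← mul_assoc]
  simp only [hgeod]
  rw [deriv_const_mul_field', deriv_const_mul_field', abs_mul, abs_inv]
  calc |α - 1|⁻¹ * |deriv (deriv fun s => log (expSum c b s)) t|
      ≤ |α - 1|⁻¹ * ∑ j, b j * b j := by gcongr; exact abs_deriv_deriv_log_expSum_le hc hb t
    _ = |1 - α| * ∑ i, log (y i / x i) ^ 2 := by
      rw [hsum, abs_sub_comm α 1, ← mul_assoc, ← mul_assoc, inv_mul_mul_self]

/-- For a fixed probability vector `q` and `α ∈ ℝ₊ \ {1}`, the Rényi divergence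
`x ↦ D_α(q‖x)` is geodesically `|1-α|`-smooth w.r.t. the Poincaré metric: along the geodesic
`γ t = x^(1-t) ⊙ y^t`, the second derivative of `t ↦ D_α(q‖γ t)` is bounded by
`|1-α| * ‖log (y ⊘ x)‖₂²`. -/
theorem stmt_6 (N : ℕ) (α : ℝ) (hα : 0 < α) (hα1 : α ≠ 1)
    (q : Fin N → ℝ) (hq : ∀ i, 0 < q i) (hq1 : ∑ i, q i = 1)
    (x y : Fin N → ℝ) (hx : ∀ i, 0 < x i) (hy : ∀ i, 0 < y i) (t : ℝ) :
    |deriv (deriv fun s : ℝ =>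
        (α - 1)⁻¹ * Real.log (∑ i, q i ^ α * (x i ^ (1 - s) * y i ^ s) ^ (1 - α))) t|
      ≤ |1 - α| * ∑ i, Real.log (y i / x i) ^ 2 :=
  stmt_6_general N α q hq hq1 x y hx hy t
end

section
/- The function f_α(x) = E_p[D_α(p‖x)] is geodesically |1−α|-smooth on R^N_{++} with respect to the Poincaré metric: for all x, y ∈ R^N_{++}, f_α(y) ≤ f_α(x) + ⟨grad f_α(x), log(y⊘x)⟩ + (|1−α|/2)‖log(y⊘x)‖₂², where grad f_α(x) = x² ⊙ ∇f_α(x) and the pairing is the Poincaré inner product at x. -/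
/-!
Put `u = log (y ⊘ x)`. For a single term `D_α(q‖·)`, the ratio `⟨q^α, y^(1-α)⟩ / ⟨q^α, x^(1-α)⟩`
is the moment generating function of `u` at `1 - α` under the escort distribution
`σ ∝ q^α ⊙ x^(1-α)`, and `x ⊙ ∇D_α(q‖x) = -σ`. So the claim says that the cumulant generating
function of `u`, scaled by `(α - 1)⁻¹`, is bounded by its tangent line plus `|1-α|/2 ‖u‖²`.
For `α < 1` this is Jensen's inequality; for `α > 1` it is Hoeffding's lemma, since `u` takes
values in `[-‖u‖, ‖u‖]`. The bound is preserved under averaging over `p`.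
-/

open scoped BigOperators

/-- `f_α(x) = E_p[D_α(p‖x)]` for a random probability vector `p` taking finitely many
values `p k` with probabilities `w k`, where
`D_α(q‖x) = (α-1)⁻¹ * log ⟨q^α, x^(1-α)⟩` (entrywise real powers). -/
noncomputable def falpha {N M : ℕ} (α : ℝ) (w : Fin M → ℝ) (p : Fin M → Fin N → ℝ)
    (x : Fin N → ℝ) : ℝ :=
  ∑ k, w k * ((α - 1)⁻¹ * Real.log (∑ i, p k i ^ α * x i ^ (1 - α)))

open Real ProbabilityTheory

lemma log_sum_mul_exp_le_of_mem_Icc {ι : Type*} [Fintype ι] {σ u : ι → ℝ} (hσ : ∀ i, 0 ≤ σ i)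
    (hσ1 : ∑ i, σ i = 1) {a b : ℝ} (hu : ∀ i, u i ∈ Set.Icc a b) (t : ℝ) :
    log (∑ i, σ i * exp (t * u i)) ≤ t * ∑ i, σ i * u i + ((b - a) / 2) ^ 2 * t ^ 2 / 2 := by
  let _ : MeasurableSpace ι := ⊤
  let P : PMF ι := PMF.ofFintype (fun i ↦ ENNReal.ofReal (σ i)) <| by
    rw [← ENNReal.ofReal_sum_of_nonneg fun i _ ↦ hσ i, hσ1, ENNReal.ofReal_one]
  have hP (f : ι → ℝ) : ∫ i, f i ∂P.toMeasure = ∑ i, σ i * f i := by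
    simp [P, PMF.integral_eq_sum, ENNReal.toReal_ofReal (hσ _)]
  set X := fun i ↦ u i - ∫ j, u j ∂P.toMeasure
  have hoeffding : cgf X P.toMeasure t ≤ ((b - a) / 2) ^ 2 * t ^ 2 / 2 := by
    convert (hasSubgaussianMGF_of_mem_Icc (μ := P.toMeasure) (X := u)
      Measurable.of_discrete.aemeasurable (MeasureTheory.ae_of_all _ hu)).cgf_le t using 3
    simp [div_pow]
  have hmgf : ∑ i, σ i * exp (t * u i) = exp (t * ∑ i, σ i * u i) * mgf X P.toMeasure t := by
    simp only [X, mgf, hP, mul_sub, exp_sub, Finset.mul_sum]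
    refine Finset.sum_congr rfl fun i _ ↦ ?_
    field_simp
  rw [hmgf, log_mul (exp_pos _).ne' (mgf_pos (.of_finite)).ne', log_exp]
  exact add_le_add_right hoeffding _

lemma sum_mul_le_log_sum_mul_exp {ι : Type*} [Fintype ι] {σ : ι → ℝ} (hσ : ∀ i, 0 ≤ σ i)
    (hσ1 : ∑ i, σ i = 1) (v : ι → ℝ) : ∑ i, σ i * v i ≤ log (∑ i, σ i * exp (v i)) := by
  have jensen := convexOn_exp.map_sum_le (fun i _ ↦ hσ i) hσ1 fun i _ ↦ Set.mem_univ (v i)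
  simp only [smul_eq_mul] at jensen
  rwa [le_log_iff_exp_le ((exp_pos _).trans_le jensen)]

lemma inv_sub_one_mul_log_sum_mul_exp_le {ι : Type*} [Fintype ι] {σ u : ι → ℝ}
    (hσ : ∀ i, 0 ≤ σ i) (hσ1 : ∑ i, σ i = 1) {α r : ℝ} (hα : α ≠ 1) (hu : ∀ i, |u i| ≤ r) :
    (α - 1)⁻¹ * log (∑ i, σ i * exp ((1 - α) * u i))
      ≤ -∑ i, σ i * u i + |1 - α| / 2 * r ^ 2 := by
  have hmean : ∑ i, σ i * ((1 - α) * u i) = (1 - α) * ∑ i, σ i * u i := by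
    rw [Finset.mul_sum]; exact Finset.sum_congr rfl fun i _ ↦ by ring
  have hcancel : (α - 1)⁻¹ * (1 - α) = -1 := by field_simp [sub_ne_zero.2 hα]; ring
  rcases hα.lt_or_gt with hlt | hgt
  · have jensen := sum_mul_le_log_sum_mul_exp hσ hσ1 fun i ↦ (1 - α) * u i
    rw [hmean] at jensen
    have := mul_le_mul_of_nonpos_left jensen (inv_nonpos.2 (by linarith : α - 1 ≤ 0))
    rw [← mul_assoc, hcancel] at this
    have : 0 ≤ |1 - α| / 2 * r ^ 2 := by positivity
    linarith
  · have hoeffding := log_sum_mul_exp_le_of_mem_Icc hσ hσ1 (fun i ↦ abs_le.1 (hu i)) (1 - α)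
    have := mul_le_mul_of_nonneg_left hoeffding (inv_nonneg.2 (by linarith : (0:ℝ) ≤ α - 1))
    rw [mul_add, ← mul_assoc, hcancel] at this
    have hr : (α - 1)⁻¹ * (((r - -r) / 2) ^ 2 * (1 - α) ^ 2 / 2) = -(1 - α) / 2 * r ^ 2 := by
      field_simp [sub_ne_zero.2 hgt.ne']; ring
    rw [abs_of_neg (by linarith : 1 - α < 0)]
    linarith

noncomputable section

section Renyi

variable {ι : Type*} [Fintype ι]

def powSum (α : ℝ) (q x : ι → ℝ) : ℝ := ∑ i, q i ^ α * x i ^ (1 - α)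

def renyiDiv (α : ℝ) (q x : ι → ℝ) : ℝ := (α - 1)⁻¹ * log (powSum α q x)

def escort (α : ℝ) (q x : ι → ℝ) (i : ι) : ℝ := q i ^ α * x i ^ (1 - α) / powSum α q x

variable {α : ℝ} {q x y : ι → ℝ}

lemma powSum_pos [Nonempty ι] (hq : ∀ i, 0 < q i) (hx : ∀ i, 0 < x i) : 0 < powSum α q x :=
  Finset.sum_pos (fun i _ ↦ by have := hq i; have := hx i; positivity) Finset.univ_nonempty

lemma escort_pos (hq : ∀ i, 0 < q i) (hx : ∀ i, 0 < x i) (i : ι) : 0 < escort α q x i := by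
  have : Nonempty ι := ⟨i⟩
  have := hq i; have := hx i
  exact div_pos (by positivity) (powSum_pos hq hx)

lemma sum_escort [Nonempty ι] (hq : ∀ i, 0 < q i) (hx : ∀ i, 0 < x i) :
    ∑ i, escort α q x i = 1 := by
  simp only [escort]
  rw [← Finset.sum_div]
  exact div_self (powSum_pos hq hx).ne'

lemma powSum_eq_mul_sum_escort_mul_exp [Nonempty ι] (hq : ∀ i, 0 < q i) (hx : ∀ i, 0 < x i)
    (hy : ∀ i, 0 < y i) :
    powSum α q y = powSum α q x * ∑ i, escort α q x i * exp ((1 - α) * log (y i / x i)) := by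
  rw [Finset.mul_sum]
  refine Finset.sum_congr rfl fun i _ ↦ ?_
  rw [escort, ← mul_assoc, mul_div_cancel₀ _ (powSum_pos hq hx).ne', mul_assoc,
    rpow_def_of_pos (hy i), rpow_def_of_pos (hx i), ← exp_add,
    log_div (hy i).ne' (hx i).ne']
  ring_nf

lemma hasFDerivAt_powSum (hx : ∀ i, 0 < x i) :
    HasFDerivAt (powSum α q)
      (∑ j, (q j ^ α * ((1 - α) * x j ^ (1 - α - 1))) •
        (ContinuousLinearMap.proj j : (ι → ℝ) →L[ℝ] ℝ)) x :=
  HasFDerivAt.fun_sum fun j _ ↦ by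
    have hpow : HasDerivAt (fun t ↦ q j ^ α * t ^ (1 - α))
        (q j ^ α * ((1 - α) * x j ^ (1 - α - 1))) (x j) :=
      (hasDerivAt_rpow_const (Or.inl (hx j).ne')).const_mul _
    exact hpow.comp_hasFDerivAt (f := fun y ↦ y j) x (hasFDerivAt_apply (𝕜 := ℝ) j x)

lemma hasFDerivAt_renyiDiv [Nonempty ι] (hq : ∀ i, 0 < q i) (hx : ∀ i, 0 < x i) :
    HasFDerivAt (renyiDiv α q)
      ((α - 1)⁻¹ • (powSum α q x)⁻¹ • ∑ j, (q j ^ α * ((1 - α) * x j ^ (1 - α - 1))) •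
        (ContinuousLinearMap.proj j : (ι → ℝ) →L[ℝ] ℝ)) x :=
  ((hasFDerivAt_powSum hx).log (powSum_pos hq hx).ne').const_mul _

end Renyi

section GeodesicSmooth

variable {ι : Type*} [Fintype ι] [DecidableEq ι]

/-- The middle term is the Poincaré pairing `⟨grad f(x), exp_x⁻¹ y⟩_x`, because
`grad f(x) = x² ⊙ ∇f(x)` and `exp_x⁻¹ y = x ⊙ log (y ⊘ x)`. -/
def GeodesicSmooth (L : ℝ) (f : (ι → ℝ) → ℝ) : Prop :=
  ∀ x y : ι → ℝ, (∀ i, 0 < x i) → (∀ i, 0 < y i) →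
    f y ≤ f x + ∑ i, x i * fderiv ℝ f x (Pi.single i 1) * log (y i / x i)
      + L / 2 * ∑ i, log (y i / x i) ^ 2

lemma GeodesicSmooth.sum {κ : Type*} [Fintype κ] {L : ℝ} {w : κ → ℝ} (hw : ∀ k, 0 ≤ w k)
    (hw1 : ∑ k, w k = 1) {f : κ → (ι → ℝ) → ℝ} (hf : ∀ k, GeodesicSmooth L (f k))
    (hdiff : ∀ k x, (∀ i, 0 < x i) → DifferentiableAt ℝ (f k) x) :
    GeodesicSmooth L fun x ↦ ∑ k, w k * f k x := by
  intro x y hx hy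
  have hderiv : HasFDerivAt (fun x ↦ ∑ k, w k * f k x) (∑ k, w k • fderiv ℝ (f k) x) x :=
    HasFDerivAt.fun_sum fun k _ ↦ (hdiff k x hx).hasFDerivAt.const_mul (w k)
  calc ∑ k, w k * f k y
      ≤ ∑ k, w k * (f k x + ∑ i, x i * fderiv ℝ (f k) x (Pi.single i 1) * log (y i / x i)
          + L / 2 * ∑ i, log (y i / x i) ^ 2) :=
        Finset.sum_le_sum fun k _ ↦ mul_le_mul_of_nonneg_left (hf k x y hx hy) (hw k)
    _ = _ := by
      simp only [mul_add, Finset.sum_add_distrib]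
      rw [← Finset.sum_mul, hw1, one_mul, hderiv.fderiv]
      congr 2
      simp only [FunLike.coe_sum, Finset.sum_apply, FunLike.coe_smul,
        Pi.smul_apply, smul_eq_mul, Finset.mul_sum, Finset.sum_mul]
      rw [Finset.sum_comm]
      exact Finset.sum_congr rfl fun i _ ↦ Finset.sum_congr rfl fun k _ ↦ by ring

variable {α : ℝ} {q x : ι → ℝ}

lemma mul_fderiv_renyiDiv_single [Nonempty ι] (hα : α ≠ 1) (hq : ∀ i, 0 < q i)
    (hx : ∀ i, 0 < x i) (i : ι) :
    x i * fderiv ℝ (renyiDiv α q) x (Pi.single i 1) = -escort α q x i := by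
  rw [(hasFDerivAt_renyiDiv hq hx).fderiv]
  simp only [sub_sub_cancel_left, smul_apply, sum_apply, ContinuousLinearMap.proj_apply,
    Pi.single_apply, smul_eq_mul, mul_ite, mul_one, mul_zero, Finset.sum_ite_eq',
    Finset.mem_univ, ↓reduceIte, escort]
  rw [sub_eq_add_neg 1 α, rpow_add (hx i), rpow_one]
  field_simp [sub_ne_zero.2 hα, (powSum_pos hq hx).ne']
  ring

theorem geodesicSmooth_renyiDiv [Nonempty ι] (hα : α ≠ 1) (hq : ∀ i, 0 < q i) :
    GeodesicSmooth |1 - α| (renyiDiv α q) := by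
  intro x y hx hy
  have hsq : 0 ≤ ∑ j, log (y j / x j) ^ 2 := Finset.sum_nonneg fun j _ ↦ sq_nonneg _
  have hbound (i : ι) : |log (y i / x i)| ≤ √(∑ j, log (y j / x j) ^ 2) :=
    abs_le_sqrt (Finset.single_le_sum (f := fun j ↦ log (y j / x j) ^ 2)
      (fun j _ ↦ sq_nonneg _) (Finset.mem_univ i))
  have key := inv_sub_one_mul_log_sum_mul_exp_le (fun i ↦ (escort_pos (α := α) hq hx i).le)
    (sum_escort hq hx) hα hbound
  rw [sq_sqrt hsq] at key
  have hpos : 0 < ∑ i, escort α q x i * exp ((1 - α) * log (y i / x i)) :=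
    Finset.sum_pos (fun i _ ↦ mul_pos (escort_pos hq hx i) (exp_pos _)) Finset.univ_nonempty
  simp only [mul_fderiv_renyiDiv_single hα hq hx, neg_mul, Finset.sum_neg_distrib]
  rw [renyiDiv, powSum_eq_mul_sum_escort_mul_exp hq hx hy,
    log_mul (powSum_pos hq hx).ne' hpos.ne', mul_add, renyiDiv]
  linarith

end GeodesicSmooth

end

theorem stmt_7_general (N M : ℕ) (α : ℝ) (hα1 : α ≠ 1)
    (w : Fin M → ℝ) (hw : ∀ k, 0 ≤ w k) (hw1 : ∑ k, w k = 1)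
    (p : Fin M → Fin N → ℝ) (hp : ∀ k, (∀ i, 0 < p k i) ∧ ∑ i, p k i = 1)
    (x y : Fin N → ℝ) (hx : ∀ i, 0 < x i) (hy : ∀ i, 0 < y i) :
    falpha α w p y ≤ falpha α w p x
      + ∑ i, x i * fderiv ℝ (falpha α w p) x (Pi.single i 1) * Real.log (y i / x i)
      + (|1 - α| / 2) * ∑ i, Real.log (y i / x i) ^ 2 := by
  have hN (k : Fin M) : Nonempty (Fin N) :=
    Finset.univ_nonempty_iff.mp (Finset.nonempty_of_sum_ne_zero ((hp k).2 ▸ one_ne_zero))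
  have hsmooth (k : Fin M) : GeodesicSmooth |1 - α| (renyiDiv α (p k)) :=
    have := hN k
    geodesicSmooth_renyiDiv hα1 (hp k).1
  have hdiff (k : Fin M) (z : Fin N → ℝ) (hz : ∀ i, 0 < z i) :
      DifferentiableAt ℝ (renyiDiv α (p k)) z :=
    have := hN k
    (hasFDerivAt_renyiDiv (hp k).1 hz).differentiableAt
  exact GeodesicSmooth.sum hw hw1 hsmooth hdiff x y hx hy

/-- `f_α` is geodesically `|1-α|`-smooth on the positive orthant w.r.t. the Poincaré metric:
`f_α(y) ≤ f_α(x) + ⟨grad f_α(x), exp_x⁻¹ y⟩_x + (|1-α|/2) ‖log (y ⊘ x)‖₂²`, where the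
Poincaré pairing of the Riemannian gradient with `exp_x⁻¹ y = x ⊙ log (y ⊘ x)` equals
`∑ i, x i * ∂ᵢ f_α(x) * log (y i / x i)`. -/
theorem stmt_7 (N M : ℕ) (α : ℝ) (hα : 0 < α) (hα1 : α ≠ 1)
    (w : Fin M → ℝ) (hw : ∀ k, 0 ≤ w k) (hw1 : ∑ k, w k = 1)
    (p : Fin M → Fin N → ℝ) (hp : ∀ k, (∀ i, 0 < p k i) ∧ ∑ i, p k i = 1)
    (x y : Fin N → ℝ) (hx : ∀ i, 0 < x i) (hy : ∀ i, 0 < y i) :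
    falpha α w p y ≤ falpha α w p x
      + ∑ i, x i * fderiv ℝ (falpha α w p) x (Pi.single i 1) * Real.log (y i / x i)
      + (|1 - α| / 2) * ∑ i, Real.log (y i / x i) ^ 2 :=
  stmt_7_general N M α hα1 w hw hw1 p hp x y hx hy
end

section
/- The linear function x ↦ ⟨1, x⟩ = Σ_i x_i is geodesically 1-smooth with respect to the Poincaré metric on the set {x ∈ R^N_{++} : x ≤ 1}: for any geodesic γ(t) = x^{1-t} ⊙ y^t with x, y in this set, (d²/dt²) Σ_i γ_i(t) = Σ_i γ_i(t)(log(y_i/x_i))² ≤ ‖log(y⊘x)‖₂². -/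
/-!
Each coordinate of the geodesic is `x i * exp (s * log (y i / x i))`, so differentiating twice
multiplies it by `log (y i / x i) ^ 2`; the weight `x i ^ (1 - t) * y i ^ t` is at most `1`
because both bases lie in `(0, 1]` and both exponents are nonnegative.
-/

open Real

lemma rpow_one_sub_mul_rpow_eq_mul_exp {a b : ℝ} (ha : 0 < a) (hb : 0 < b) (s : ℝ) :
    a ^ (1 - s) * b ^ s = a * exp (s * log (b / a)) := by
  calc a ^ (1 - s) * b ^ s = exp (log a + s * (log b - log a)) := by
        rw [rpow_def_of_pos ha, rpow_def_of_pos hb, ← exp_add]; ring_nf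
    _ = a * exp (s * log (b / a)) := by rw [exp_add, exp_log ha, log_div hb.ne' ha.ne']

lemma hasDerivAt_const_mul_exp_mul (a c t : ℝ) :
    HasDerivAt (fun s => a * exp (s * c)) (a * c * exp (t * c)) t := by
  refine ((((hasDerivAt_id t).mul_const c).exp).const_mul a).congr_deriv ?_
  simp only [id, one_mul]
  ring

lemma deriv_sum_const_mul_exp_mul {ι : Type*} [Fintype ι] (a c : ι → ℝ) :
    deriv (fun s => ∑ i, a i * exp (s * c i)) = fun s => ∑ i, a i * c i * exp (s * c i) :=
  funext fun t =>
    (HasDerivAt.fun_sum fun i _ => hasDerivAt_const_mul_exp_mul (a i) (c i) t).deriv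

lemma rpow_one_sub_mul_rpow_le_one {a b t : ℝ} (ha : 0 ≤ a) (ha1 : a ≤ 1) (hb : 0 ≤ b)
    (hb1 : b ≤ 1) (ht : t ∈ Set.Icc (0 : ℝ) 1) : a ^ (1 - t) * b ^ t ≤ 1 :=
  mul_le_one₀ (rpow_le_one ha ha1 (sub_nonneg.2 ht.2)) (rpow_nonneg hb t)
    (rpow_le_one hb hb1 ht.1)

/-- The linear function `x ↦ ∑ i, x i` is geodesically 1-smooth on
`{x ∈ ℝᴺ₊₊ : x ≤ 1}` w.r.t. the Poincaré metric: along the geodesic `γ t = x^(1-t) ⊙ y^t`,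
`(d²/dt²) ∑ i, γ t i = ∑ i, γ t i * (log (y i / x i))² ≤ ‖log (y ⊘ x)‖₂²`. -/
theorem stmt_8 (N : ℕ) (x y : Fin N → ℝ)
    (hx : ∀ i, 0 < x i) (hx1 : ∀ i, x i ≤ 1)
    (hy : ∀ i, 0 < y i) (hy1 : ∀ i, y i ≤ 1)
    (t : ℝ) (ht : t ∈ Set.Icc (0:ℝ) 1) :
    deriv (deriv fun s : ℝ => ∑ i, x i ^ (1 - s) * y i ^ s) t
      = ∑ i, (x i ^ (1 - t) * y i ^ t) * Real.log (y i / x i) ^ 2 ∧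
    ∑ i, (x i ^ (1 - t) * y i ^ t) * Real.log (y i / x i) ^ 2
      ≤ ∑ i, Real.log (y i / x i) ^ 2 := by
  have hγ (s : ℝ) (i : Fin N) := rpow_one_sub_mul_rpow_eq_mul_exp (hx i) (hy i) s
  refine ⟨?_, Finset.sum_le_sum fun i _ => mul_le_of_le_one_left (sq_nonneg _)
    (rpow_one_sub_mul_rpow_le_one (hx i).le (hx1 i) (hy i).le (hy1 i) ht)⟩
  simp only [hγ, deriv_sum_const_mul_exp_mul]
  exact Finset.sum_congr rfl fun i _ => by ring
end

section
/- For the RGD iteration x_{t+1} = x_t ⊙ exp(−η x_t ⊙ ∇g_α(x_t)) with η = 1/(|1−α|+1) and x₁ ∈ Δ^N_+, every iterate satisfies x_t ≤ 1 entrywise. -/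
open scoped BigOperators

/-- `g_α(x) = ⟨1, x⟩ + f_α(x)`. -/
noncomputable def galpha {N M : ℕ} (α : ℝ) (w : Fin M → ℝ) (p : Fin M → Fin N → ℝ)
    (x : Fin N → ℝ) : ℝ :=
  (∑ i, x i) + falpha α w p x

/-! Since `x_i ∂_i g_α(x) = x_i - E_p[p_i^α x_i^(1-α) / ⟨p^α, x^(1-α)⟩]` and each of those ratios
is a share of a sum of positive terms, `x_i ∂_i g_α(x) ≥ x_i - 1`. Hence, while `0 < x_i ≤ 1`, the
exponent of the update is at most `η (1 - x_i) ≤ 1 - x_i`, and `a e^(1-a) ≤ 1` because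
`e^(a-1) ≥ a`. Induction from a point of the simplex keeps every iterate in `(0, 1]`. -/

open Real Finset

section
variable {N M : ℕ} {α : ℝ} {w : Fin M → ℝ} {p : Fin M → Fin N → ℝ} {y : Fin N → ℝ}

lemma fderiv_galpha_single (hα1 : α ≠ 1) (hp : ∀ k i, 0 < p k i) (hy : ∀ j, 0 < y j)
    (i : Fin N) :
    fderiv ℝ (galpha α w p) y (Pi.single i 1) =
      1 - ∑ k, w k * (p k i ^ α * y i ^ (-α) / ∑ j, p k j ^ α * y j ^ (1 - α)) := by
  have : Nonempty (Fin N) := ⟨i⟩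
  have hpos : ∀ k, 0 < ∑ j, p k j ^ α * y j ^ (1 - α) := fun k =>
    sum_pos (fun j _ => by have := hp k j; have := hy j; positivity) univ_nonempty
  have hderiv : ∀ k, HasFDerivAt (fun z : Fin N → ℝ => ∑ j, p k j ^ α * z j ^ (1 - α))
      (∑ j, p k j ^ α • ((1 - α) * y j ^ (1 - α - 1)) •
        (ContinuousLinearMap.proj j : (Fin N → ℝ) →L[ℝ] ℝ)) y := fun k =>
    HasFDerivAt.fun_sum fun j _ =>
      ((hasFDerivAt_apply j y).rpow_const (Or.inl (hy j).ne')).const_mul _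
  have hg : HasFDerivAt (galpha α w p) _ y :=
    (HasFDerivAt.fun_sum fun j _ => hasFDerivAt_apply j y).add
      (HasFDerivAt.fun_sum fun k _ => (((hderiv k).log (hpos k).ne').const_mul _).const_mul _)
  have hsub : (α - 1)⁻¹ * (1 - α) = -1 := by
    field_simp [sub_ne_zero.2 hα1]; ring
  simp only [hg.fderiv, add_apply, _root_.sum_apply, smul_apply,
    ContinuousLinearMap.proj_apply, smul_eq_mul, Pi.single_apply, mul_ite, mul_one, mul_zero,
    sum_ite_eq', mem_univ, if_true, sub_eq_add_neg, ← sum_neg_distrib]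
  congr 1
  refine sum_congr rfl fun k _ => ?_
  rw [show 1 + -α + -1 = -α by ring]
  linear_combination
    (w k * (∑ j, p k j ^ α * y j ^ (1 - α))⁻¹ * p k i ^ α * y i ^ (-α)) * hsub

lemma sub_one_le_mul_fderiv_galpha_single (hα1 : α ≠ 1) (hw : ∀ k, 0 ≤ w k)
    (hw1 : ∑ k, w k = 1) (hp : ∀ k i, 0 < p k i) (hy : ∀ j, 0 < y j) (i : Fin N) :
    y i - 1 ≤ y i * fderiv ℝ (galpha α w p) y (Pi.single i 1) := by
  have hratio :
      ∀ k, y i * (p k i ^ α * y i ^ (-α) / ∑ j, p k j ^ α * y j ^ (1 - α)) ≤ 1 := by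
    intro k
    have hterm : ∀ j, 0 ≤ p k j ^ α * y j ^ (1 - α) := fun j => by
      have := hp k j; have := hy j; positivity
    have hyi : y i * y i ^ (-α) = y i ^ (1 - α) := by
      rw [sub_eq_add_neg, rpow_add (hy i), rpow_one]
    rw [mul_div_assoc', mul_left_comm, hyi]
    exact div_le_one_of_le₀ (single_le_sum (fun j _ => hterm j) (mem_univ i))
      (sum_nonneg fun j _ => hterm j)
  calc y i - 1 = y i - ∑ k, w k * 1 := by simp [hw1]
    _ ≤ y i - ∑ k, w k * (y i * (p k i ^ α * y i ^ (-α) / ∑ j, p k j ^ α * y j ^ (1 - α))) := by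
      gcongr with k
      · exact hw k
      · exact hratio k
    _ = y i * fderiv ℝ (galpha α w p) y (Pi.single i 1) := by
      rw [fderiv_galpha_single hα1 hp hy, mul_sub, mul_one, mul_sum]
      congr 1; exact sum_congr rfl fun k _ => by ring

end

lemma mul_exp_le_one_of_sub_one_le {a b η : ℝ} (ha : 0 < a) (ha1 : a ≤ 1) (hη : 0 ≤ η)
    (hη1 : η ≤ 1) (hb : a - 1 ≤ b) : a * exp (-η * b) ≤ 1 := by
  have hexp : -η * b ≤ 1 - a := by nlinarith
  calc a * exp (-η * b) ≤ a * exp (1 - a) := by gcongr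
    _ = a / exp (a - 1) := by rw [div_eq_mul_inv, ← exp_neg, neg_sub]
    _ ≤ 1 := div_le_one_of_le₀ (by linarith [add_one_le_exp (a - 1)]) (exp_pos _).le

theorem stmt_10_general (N M : ℕ) (α : ℝ) (hα1 : α ≠ 1)
    (w : Fin M → ℝ) (hw : ∀ k, 0 ≤ w k) (hw1 : ∑ k, w k = 1)
    (p : Fin M → Fin N → ℝ) (hp : ∀ k, (∀ i, 0 < p k i) ∧ ∑ i, p k i = 1)
    (x : ℕ → Fin N → ℝ)
    (h1 : (∀ i, 0 < x 0 i) ∧ ∑ i, x 0 i = 1)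
    (hrec : ∀ t i, x (t + 1) i = x t i *
      Real.exp (-(|1 - α| + 1)⁻¹ * (x t i * fderiv ℝ (galpha α w p) (x t) (Pi.single i 1)))) :
    ∀ t i, x t i ≤ 1 := by
  have hη : 0 ≤ (|1 - α| + 1)⁻¹ := by positivity
  have hη1 : (|1 - α| + 1)⁻¹ ≤ 1 := inv_le_one_of_one_le₀ (by linarith [abs_nonneg (1 - α)])
  suffices h : ∀ t, (∀ i, 0 < x t i) ∧ ∀ i, x t i ≤ 1 from fun t => (h t).2
  intro t
  induction t with
  | zero => exact ⟨h1.1, fun i => h1.2 ▸ single_le_sum (fun j _ => (h1.1 j).le) (mem_univ i)⟩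
  | succ t ih =>
    refine ⟨fun i => hrec t i ▸ mul_pos (ih.1 i) (exp_pos _), fun i => hrec t i ▸ ?_⟩
    exact mul_exp_le_one_of_sub_one_le (ih.1 i) (ih.2 i) hη hη1
      (sub_one_le_mul_fderiv_galpha_single hα1 hw hw1 (fun k => (hp k).1) ih.1 i)

/-- The RGD iterates `x_{t+1} = x_t ⊙ exp(-η x_t ⊙ ∇g_α(x_t))` with step size
`η = 1/(|1-α|+1)`, started at a point of the relative interior of the simplex, satisfy
`x_t ≤ 1` entrywise. -/
theorem stmt_10 (N M : ℕ) (α : ℝ) (hα : 0 < α) (hα1 : α ≠ 1)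
    (w : Fin M → ℝ) (hw : ∀ k, 0 ≤ w k) (hw1 : ∑ k, w k = 1)
    (p : Fin M → Fin N → ℝ) (hp : ∀ k, (∀ i, 0 < p k i) ∧ ∑ i, p k i = 1)
    (x : ℕ → Fin N → ℝ)
    (h1 : (∀ i, 0 < x 0 i) ∧ ∑ i, x 0 i = 1)
    (hrec : ∀ t i, x (t + 1) i = x t i *
      Real.exp (-(|1 - α| + 1)⁻¹ * (x t i * fderiv ℝ (galpha α w p) (x t) (Pi.single i 1)))) :
    ∀ t i, x t i ≤ 1 :=
  stmt_10_general N M α hα1 w hw hw1 p hp x h1 hrec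
end

section
/- For x ∈ (0,1]^N, each coordinate of the Riemannian gradient of g_α satisfies x_i (∂g_α/∂x_i)(x) ≥ x_i − 1, which implies the multiplicative update x_i exp(−η x_i ∂g_α/∂x_i(x)) ≤ x_i exp(η(1−x_i)) ≤ 1 for η ≤ 1. -/
/-!
With `S_k(x) = ⟨p_k^α, x^(1-α)⟩`, the chain rule gives
`x_i ∂_i g_α(x) = x_i - ∑_k w_k p_{k,i}^α x_i^(1-α) / S_k(x)`, and the subtracted `w`-average of
the shares `p_{k,i}^α x_i^(1-α) / S_k(x) ∈ (0, 1]` is at most `1`. The bound on the multiplicative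
update then reduces to `t e^{η(1-t)} ≤ t e^{1-t} ≤ e^{t-1} e^{1-t} = 1`, i.e. to `t ≤ e^{t-1}`.
-/

open scoped BigOperators

open Real ContinuousLinearMap

noncomputable def rpowPairing {N : ℕ} (α : ℝ) (q x : Fin N → ℝ) : ℝ :=
  ∑ j, q j ^ α * x j ^ (1 - α)

section RpowPairing

variable {N : ℕ} {α : ℝ} {q x : Fin N → ℝ}

lemma rpowPairing_term_pos (hq : ∀ j, 0 < q j) (hx : ∀ j, 0 < x j) (j : Fin N) :
    0 < q j ^ α * x j ^ (1 - α) :=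
  mul_pos (rpow_pos_of_pos (hq j) α) (rpow_pos_of_pos (hx j) _)

lemma term_le_rpowPairing (hq : ∀ j, 0 < q j) (hx : ∀ j, 0 < x j) (i : Fin N) :
    q i ^ α * x i ^ (1 - α) ≤ rpowPairing α q x :=
  Finset.single_le_sum (fun j _ => (rpowPairing_term_pos hq hx j).le) (Finset.mem_univ i)

lemma rpowPairing_pos [Nonempty (Fin N)] (hq : ∀ j, 0 < q j) (hx : ∀ j, 0 < x j) :
    0 < rpowPairing α q x :=
  (rpowPairing_term_pos hq hx (Classical.arbitrary _)).trans_le (term_le_rpowPairing hq hx _)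

lemma hasFDerivAt_rpowPairing (hx : ∀ j, 0 < x j) :
    HasFDerivAt (rpowPairing α q)
      (∑ j, q j ^ α • ((1 - α) * x j ^ (1 - α - 1)) •
        proj (R := ℝ) (φ := fun _ : Fin N => ℝ) j) x :=
  HasFDerivAt.fun_sum fun j _ =>
    ((hasFDerivAt_apply j x).rpow_const (p := 1 - α) (Or.inl (hx j).ne')).const_mul (q j ^ α)

end RpowPairing

section Galpha

variable {N M : ℕ} {α : ℝ} {w : Fin M → ℝ} {p : Fin M → Fin N → ℝ} {x : Fin N → ℝ}

lemma hasFDerivAt_galpha [Nonempty (Fin N)] (hp : ∀ k j, 0 < p k j) (hx : ∀ j, 0 < x j) :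
    HasFDerivAt (galpha α w p)
      (∑ j, proj (R := ℝ) (φ := fun _ : Fin N => ℝ) j +
        ∑ k, w k • (α - 1)⁻¹ • (rpowPairing α (p k) x)⁻¹ •
          ∑ j, p k j ^ α • ((1 - α) * x j ^ (1 - α - 1)) •
            proj (R := ℝ) (φ := fun _ : Fin N => ℝ) j) x :=
  (HasFDerivAt.fun_sum fun j _ => hasFDerivAt_apply j x).add <|
    HasFDerivAt.fun_sum fun k _ =>
      (((hasFDerivAt_rpowPairing (α := α) (q := p k) hx).log
        (rpowPairing_pos (hp k) hx).ne').const_mul (α - 1)⁻¹).const_mul (w k)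

lemma mul_fderiv_galpha_single (hα1 : α ≠ 1) (hp : ∀ k j, 0 < p k j) (hx : ∀ j, 0 < x j)
    (i : Fin N) :
    x i * fderiv ℝ (galpha α w p) x (Pi.single i 1) =
      x i - ∑ k, w k * (p k i ^ α * x i ^ (1 - α) / rpowPairing α (p k) x) := by
  have : Nonempty (Fin N) := ⟨i⟩
  have hα : α - 1 ≠ 0 := sub_ne_zero.mpr hα1
  have hpow : x i * x i ^ (-α) = x i ^ (1 - α) := by
    rw [sub_eq_add_neg, rpow_add (hx i), rpow_one]
  rw [(hasFDerivAt_galpha hp hx).fderiv]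
  simp only [add_apply, sum_apply, smul_apply, proj_apply, Pi.single_apply, smul_eq_mul,
    mul_ite, mul_one, mul_zero, Finset.sum_ite_eq', Finset.mem_univ, if_true]
  rw [mul_add, mul_one, Finset.mul_sum, sub_eq_add_neg (x i), ← Finset.sum_neg_distrib]
  congr 1
  refine Finset.sum_congr rfl fun k _ => ?_
  rw [sub_sub_cancel_left, ← hpow]
  field_simp
  ring

lemma sum_mul_term_div_rpowPairing_le_one (hw : ∀ k, 0 ≤ w k) (hw1 : ∑ k, w k = 1)
    (hp : ∀ k j, 0 < p k j) (hx : ∀ j, 0 < x j) (i : Fin N) :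
    ∑ k, w k * (p k i ^ α * x i ^ (1 - α) / rpowPairing α (p k) x) ≤ 1 := by
  have : Nonempty (Fin N) := ⟨i⟩
  calc ∑ k, w k * (p k i ^ α * x i ^ (1 - α) / rpowPairing α (p k) x)
      ≤ ∑ k, w k * 1 := by
        gcongr with k
        · exact hw k
        · exact (div_le_one (rpowPairing_pos (hp k) hx)).mpr (term_le_rpowPairing (hp k) hx i)
    _ = 1 := by simp [hw1]

end Galpha

lemma mul_exp_mul_one_sub_le_one {t η : ℝ} (ht1 : t ≤ 1) (hη1 : η ≤ 1) :
    t * exp (η * (1 - t)) ≤ 1 :=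
  calc t * exp (η * (1 - t)) ≤ exp (t - 1) * exp (1 - t) := by
        gcongr
        · linarith [add_one_le_exp (t - 1)]
        · nlinarith
    _ = 1 := by rw [← exp_add, sub_add_sub_cancel', sub_self, exp_zero]

theorem stmt_11_general (N M : ℕ) (α : ℝ) (hα1 : α ≠ 1)
    (w : Fin M → ℝ) (hw : ∀ k, 0 ≤ w k) (hw1 : ∑ k, w k = 1)
    (p : Fin M → Fin N → ℝ) (hp : ∀ k, (∀ i, 0 < p k i) ∧ ∑ i, p k i = 1)
    (x : Fin N → ℝ) (hx : ∀ i, 0 < x i) (hx1 : ∀ i, x i ≤ 1)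
    (η : ℝ) (hη : 0 < η) (hη1 : η ≤ 1) :
    ∀ i, x i - 1 ≤ x i * fderiv ℝ (galpha α w p) x (Pi.single i 1) ∧
      x i * Real.exp (-η * (x i * fderiv ℝ (galpha α w p) x (Pi.single i 1)))
        ≤ x i * Real.exp (η * (1 - x i)) ∧
      x i * Real.exp (η * (1 - x i)) ≤ 1 := by
  intro i
  have hp_pos : ∀ k j, 0 < p k j := fun k => (hp k).1
  have hgrad : x i - 1 ≤ x i * fderiv ℝ (galpha α w p) x (Pi.single i 1) := by
    rw [mul_fderiv_galpha_single hα1 hp_pos hx]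
    linarith [sum_mul_term_div_rpowPairing_le_one (α := α) hw hw1 hp_pos hx i]
  refine ⟨hgrad, ?_, mul_exp_mul_one_sub_le_one (hx1 i) hη1⟩
  exact mul_le_mul_of_nonneg_left (exp_le_exp.mpr (by nlinarith)) (hx i).le

/-- For `x ∈ (0,1]^N`, each coordinate of the Riemannian gradient of `g_α` satisfies
`x i * ∂ᵢ g_α(x) ≥ x i - 1`; consequently, for step size `η ∈ (0,1]`, the multiplicative
update satisfies `x i * exp(-η * x i * ∂ᵢ g_α(x)) ≤ x i * exp(η (1 - x i)) ≤ 1`. -/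
theorem stmt_11 (N M : ℕ) (α : ℝ) (hα : 0 < α) (hα1 : α ≠ 1)
    (w : Fin M → ℝ) (hw : ∀ k, 0 ≤ w k) (hw1 : ∑ k, w k = 1)
    (p : Fin M → Fin N → ℝ) (hp : ∀ k, (∀ i, 0 < p k i) ∧ ∑ i, p k i = 1)
    (x : Fin N → ℝ) (hx : ∀ i, 0 < x i) (hx1 : ∀ i, x i ≤ 1)
    (η : ℝ) (hη : 0 < η) (hη1 : η ≤ 1) :
    ∀ i, x i - 1 ≤ x i * fderiv ℝ (galpha α w p) x (Pi.single i 1) ∧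
      x i * Real.exp (-η * (x i * fderiv ℝ (galpha α w p) x (Pi.single i 1)))
        ≤ x i * Real.exp (η * (1 - x i)) ∧
      x i * Real.exp (η * (1 - x i)) ≤ 1 :=
  stmt_11_general N M α hα1 w hw hw1 p hp x hx hx1 η hη hη1
end

section
/- Let f ∈ C¹(R^N_+) be convex in the Euclidean sense and geodesically L-smooth with respect to the Poincaré metric on R^N_{++}. If the RGD iterates x_{t+1} = x_t ⊙ exp(−(1/L) x_t ⊙ ∇f(x_t)) starting from x₁ ∈ R^N_{++} converge to a point x_∞ ∈ R^N_+ (possibly on the boundary), then x_∞ is a minimizer of f on R^N_+. -/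
/-!
Each coordinate of the iteration is a multiplicative update
`a (t+1) = a t * exp (-η * a t * g t)` with `a t → x∞ i` and `g t → ∂ᵢf(x∞)`, where `∂ᵢf(x∞)` is
the derivative of `f` within the closed orthant, the limit of `∂ᵢf(x t)` by `C¹`-regularity.
Passing to the limit in the update gives `x∞ i = x∞ i * exp (-η * x∞ i * ∂ᵢf(x∞))`, i.e.
complementary slackness `x∞ i * ∂ᵢf(x∞) = 0`. If `x∞ i = 0` but `∂ᵢf(x∞) < 0`, the coordinate
would eventually be nondecreasing and positive, so it could not tend to `0`. These KKT conditions
suffice by convexity: `f z - f x∞ ≥ ∇f(x∞) (z - x∞) = ∑ z i * ∂ᵢf(x∞) ≥ 0`.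
-/

open Filter Topology Set

theorem ConvexOn.apply_sub_le_of_hasFDerivWithinAt {E : Type*} [NormedAddCommGroup E]
    [NormedSpace ℝ E] {s : Set E} {f : E → ℝ} {f' : E →L[ℝ] ℝ} {x y : E}
    (hf : ConvexOn ℝ s f) (hx : x ∈ s) (hy : y ∈ s) (hf' : HasFDerivWithinAt f f' s x) :
    f' (y - x) ≤ f y - f x := by
  set γ : ℝ →ᵃ[ℝ] E := AffineMap.lineMap x y
  have h0 : (0 : ℝ) ∈ γ ⁻¹' s := by simpa [γ] using hx
  have h1 : (1 : ℝ) ∈ γ ⁻¹' s := by simpa [γ] using hy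
  have hderiv : HasDerivWithinAt (f ∘ γ) (f' (y - x)) (γ ⁻¹' s) 0 :=
    hf'.comp_hasDerivWithinAt_of_eq 0 AffineMap.hasDerivWithinAt_lineMap (mapsTo_preimage _ _)
      (by simp [γ])
  simpa [slope_def_field, γ] using
    (hf.comp_affineMap γ).le_slope_of_hasDerivWithinAt h0 h1 one_pos hderiv

theorem tendsto_fderiv_of_contDiffOn {𝕜 E F α : Type*} [NontriviallyNormedField 𝕜]
    [NormedAddCommGroup E] [NormedSpace 𝕜 E] [NormedAddCommGroup F] [NormedSpace 𝕜 F]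
    {f : E → F} {s : Set E} {a : E} {l : Filter α} {x : α → E}
    (hf : ContDiffOn 𝕜 1 f s) (hs : UniqueDiffOn 𝕜 s) (ha : a ∈ s)
    (hx : Tendsto x l (𝓝 a)) (hxs : ∀ t, s ∈ 𝓝 (x t)) :
    Tendsto (fun t => fderiv 𝕜 f (x t)) l (𝓝 (fderivWithin 𝕜 f s a)) := by
  have hx' : Tendsto x l (𝓝[s] a) :=
    tendsto_nhdsWithin_iff.2 ⟨hx, .of_forall fun t => mem_of_mem_nhds (hxs t)⟩
  exact ((hf.continuousOn_fderivWithin hs le_rfl a ha).tendsto.comp hx').congr fun t =>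
    fderivWithin_of_mem_nhds (hxs t)

namespace Pi

theorem Ici_mem_nhds {ι : Type*} [Finite ι] {a x : ι → ℝ} (hx : ∀ i, a i < x i) : Ici a ∈ 𝓝 x := by
  rw [← pi_univ_Ici]
  exact set_pi_mem_nhds finite_univ fun i _ => _root_.Ici_mem_nhds (hx i)

theorem uniqueDiffOn_Ici {ι : Type*} (a : ι → ℝ) : UniqueDiffOn ℝ (Ici a) := by
  rw [← pi_univ_Ici]
  exact UniqueDiffOn.pi fun i _ => _root_.uniqueDiffOn_Ici (a i)

end Pi

theorem ContinuousLinearMap.apply_eq_sum_mul_single {ι : Type*} [Fintype ι] [DecidableEq ι]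
    (f : (ι → ℝ) →L[ℝ] ℝ) (v : ι → ℝ) : f v = ∑ i, v i * f (Pi.single i 1) := by
  conv_lhs => rw [← Finset.univ_sum_single v]
  simp only [map_sum]
  refine Finset.sum_congr rfl fun i _ => ?_
  rw [← smul_eq_mul, ← map_smul, ← Pi.single_smul, smul_eq_mul, mul_one]

theorem ConvexOn.isMinOn_Ici_zero {ι : Type*} [Fintype ι] [DecidableEq ι]
    {f : (ι → ℝ) → ℝ} {f' : (ι → ℝ) →L[ℝ] ℝ} {a : ι → ℝ}
    (hf : ConvexOn ℝ (Ici 0) f) (ha : 0 ≤ a) (hf' : HasFDerivWithinAt f f' (Ici 0) a)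
    (hdual : ∀ i, 0 ≤ f' (Pi.single i 1)) (hslack : ∀ i, a i * f' (Pi.single i 1) = 0) :
    IsMinOn f (Ici 0) a := by
  intro z (hz : 0 ≤ z)
  show f a ≤ f z
  have hgrad : f' (z - a) = ∑ i, z i * f' (Pi.single i 1) := by
    rw [f'.apply_eq_sum_mul_single]
    simp only [Pi.sub_apply, sub_mul, hslack, sub_zero]
  have : 0 ≤ f' (z - a) := hgrad ▸ Finset.sum_nonneg fun i _ => mul_nonneg (hz i) (hdual i)
  linarith [hf.apply_sub_le_of_hasFDerivWithinAt ha hz hf']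

section MulExpUpdate

variable {η : ℝ} {a g : ℕ → ℝ}

theorem pos_of_mul_exp_update (h0 : 0 < a 0)
    (hrec : ∀ t, a (t + 1) = a t * Real.exp (-η * (a t * g t))) : ∀ t, 0 < a t
  | 0 => h0
  | t + 1 => hrec t ▸ mul_pos (pos_of_mul_exp_update h0 hrec t) (Real.exp_pos _)

theorem mul_eq_zero_of_mul_exp_update (hη : η ≠ 0)
    (hrec : ∀ t, a (t + 1) = a t * Real.exp (-η * (a t * g t))) {a' c : ℝ}
    (ha : Tendsto a atTop (𝓝 a')) (hg : Tendsto g atTop (𝓝 c)) : a' * c = 0 := by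
  have hstep : Tendsto (fun t => a (t + 1)) atTop (𝓝 (a' * Real.exp (-η * (a' * c)))) := by
    simp_rw [hrec]
    exact ha.mul (((ha.mul hg).const_mul (-η)).rexp)
  have hfix : a' * Real.exp (-η * (a' * c)) = a' * 1 := by
    rw [mul_one]; exact tendsto_nhds_unique hstep ((tendsto_add_atTop_iff_nat 1).2 ha)
  rcases eq_or_ne a' 0 with h | h
  · rw [h, zero_mul]
  · have := Real.exp_eq_one_iff _ |>.1 (mul_left_cancel₀ h hfix)
    simpa [hη] using this

theorem nonneg_of_mul_exp_update (hη : 0 < η) (hpos : ∀ t, 0 < a t)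
    (hrec : ∀ t, a (t + 1) = a t * Real.exp (-η * (a t * g t))) {c : ℝ}
    (ha : Tendsto a atTop (𝓝 0)) (hg : Tendsto g atTop (𝓝 c)) : 0 ≤ c := by
  by_contra! hc
  obtain ⟨T, hT⟩ := eventually_atTop.1 (hg.eventually_lt_const hc)
  have hmono : Monotone fun k => a (k + T) := monotone_nat_of_le_succ fun k => by
    have hexp : 0 ≤ -η * (a (k + T) * g (k + T)) :=
      mul_nonneg_of_nonpos_of_nonpos (by linarith)
        (mul_neg_of_pos_of_neg (hpos _) (hT _ (Nat.le_add_left T k))).le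
    rw [add_right_comm, hrec]
    exact le_mul_of_one_le_right (hpos _).le (Real.one_le_exp hexp)
  have := hmono.ge_of_tendsto ((tendsto_add_atTop_iff_nat T).2 ha) 0
  linarith [hpos T, zero_add T ▸ this]

end MulExpUpdate

theorem stmt_14_general (N : ℕ) (f : (Fin N → ℝ) → ℝ) (L : ℝ) (hL : 0 < L)
    (hC1 : ContDiffOn ℝ 1 f {x : Fin N → ℝ | ∀ i, 0 ≤ x i})
    (hconv : ConvexOn ℝ {x : Fin N → ℝ | ∀ i, 0 ≤ x i} f)
    (x : ℕ → Fin N → ℝ) (hx0 : ∀ i, 0 < x 0 i)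
    (hrec : ∀ t i, x (t + 1) i
      = x t i * Real.exp (-L⁻¹ * (x t i * fderiv ℝ f (x t) (Pi.single i 1))))
    (xinf : Fin N → ℝ) (hinf : ∀ i, 0 ≤ xinf i)
    (hlim : Filter.Tendsto x Filter.atTop (nhds xinf)) :
    ∀ z : Fin N → ℝ, (∀ i, 0 ≤ z i) → f xinf ≤ f z := by
  change ContDiffOn ℝ 1 f (Ici 0) at hC1
  change ConvexOn ℝ (Ici 0) f at hconv
  have hpos t i : 0 < x t i := pos_of_mul_exp_update (a := fun t => x t i) (hx0 i) (fun t => hrec t i) t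
  set D := fderivWithin ℝ f (Ici 0) xinf
  have hD : Tendsto (fun t => fderiv ℝ f (x t)) atTop (𝓝 D) :=
    tendsto_fderiv_of_contDiffOn hC1 (Pi.uniqueDiffOn_Ici 0) hinf hlim fun t =>
      Pi.Ici_mem_nhds (hpos t)
  have hpartial i : Tendsto (fun t => fderiv ℝ f (x t) (Pi.single i 1)) atTop
      (𝓝 (D (Pi.single i 1))) :=
    ((ContinuousLinearMap.apply ℝ ℝ (Pi.single i 1)).continuous.tendsto D).comp hD
  have hslack i : xinf i * D (Pi.single i 1) = 0 :=
    mul_eq_zero_of_mul_exp_update (inv_ne_zero hL.ne') (fun t => hrec t i)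
      (tendsto_pi_nhds.1 hlim i) (hpartial i)
  have hdual i : 0 ≤ D (Pi.single i 1) := by
    rcases (hinf i).eq_or_lt with h | h
    · exact nonneg_of_mul_exp_update (inv_pos.2 hL) (fun t => hpos t i) (fun t => hrec t i)
        (h ▸ tendsto_pi_nhds.1 hlim i) (hpartial i)
    · exact ((mul_eq_zero.1 (hslack i)).resolve_left h.ne').ge
  have hD' : HasFDerivWithinAt f D (Ici 0) xinf :=
    (hC1.differentiableOn one_ne_zero xinf hinf).hasFDerivWithinAt
  exact fun z hz => hconv.isMinOn_Ici_zero hinf hD' hdual hslack hz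

/-- Boundary lemma: if `f ∈ C¹(ℝᴺ₊)` is Euclidean convex and geodesically `L`-smooth w.r.t.
the Poincaré metric, and the RGD iterates with step size `1/L` converge to a point
`x_∞ ∈ ℝᴺ₊` (possibly on the boundary), then `x_∞` minimizes `f` over `ℝᴺ₊`. -/
theorem stmt_14 (N : ℕ) (f : (Fin N → ℝ) → ℝ) (L : ℝ) (hL : 0 < L)
    (hC1 : ContDiffOn ℝ 1 f {x : Fin N → ℝ | ∀ i, 0 ≤ x i})
    (hconv : ConvexOn ℝ {x : Fin N → ℝ | ∀ i, 0 ≤ x i} f)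
    (hsmooth : ∀ x y : Fin N → ℝ, (∀ i, 0 < x i) → (∀ i, 0 < y i) →
      f y ≤ f x + (∑ i, (x i * fderiv ℝ f x (Pi.single i 1)) * Real.log (y i / x i))
        + L / 2 * ∑ i, Real.log (y i / x i) ^ 2)
    (x : ℕ → Fin N → ℝ) (hx0 : ∀ i, 0 < x 0 i)
    (hrec : ∀ t i, x (t + 1) i
      = x t i * Real.exp (-L⁻¹ * (x t i * fderiv ℝ f (x t) (Pi.single i 1))))
    (xinf : Fin N → ℝ) (hinf : ∀ i, 0 ≤ xinf i)
    (hlim : Filter.Tendsto x Filter.atTop (nhds xinf)) :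
    ∀ z : Fin N → ℝ, (∀ i, 0 ≤ z i) → f xinf ≤ f z :=
  stmt_14_general N f L hL hC1 hconv x hx0 hrec xinf hinf hlim
end
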